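/- The scaling function G(x) = x/(k(x)·[K(k(x)) - F((π - arcsin x)/2, k(x))]), where β₁ = arcsin x, f₊ = 2/(cos²β₁ + 1/cos²β₁), and k(x)² = 2(1-f₊²)/[(1-cos β₁)f₊² + 2(1-f₊²)], satisfies x·G(x) → 1 as x → 0⁺. -/

import Mathlib

open Real

/-- The elliptic modulus `k(x)` associated with spacing ratio `x = d/ℓ`. -/
noncomputable def dominoModulus (x : ℝ) : ℝ :=
  Real.sqrt (2 * (1 - (2 / (cos (arcsin x) ^ 2 + 1 / cos (arcsin x) ^ 2)) ^ 2) /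
    ((1 - cos (arcsin x)) * (2 / (cos (arcsin x) ^ 2 + 1 / cos (arcsin x) ^ 2)) ^ 2 +
      2 * (1 - (2 / (cos (arcsin x) ^ 2 + 1 / cos (arcsin x) ^ 2)) ^ 2)))

/-- The incomplete elliptic integral of the first kind `F(φ, k)`. -/
noncomputable def ellipticF (φ k : ℝ) : ℝ :=
  ∫ t in (0:ℝ)..φ, 1 / Real.sqrt (1 - k ^ 2 * Real.sin t ^ 2)

/-- The scaling function `G(x)` for the domino wave speed. -/
noncomputable def dominoG (x : ℝ) : ℝ :=
  x / (dominoModulus x *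
    (ellipticF (π / 2) (dominoModulus x) - ellipticF ((π - arcsin x) / 2) (dominoModulus x)))

/-!
Write `c = cos β₁ = √(1 - x²)`. Since `1 - f₊² = (1 - c²)²(1 + c²)²/(1 + c⁴)²` and
`1 - c = (1 - c²)/(1 + c)`, one gets `k(x)² = x² · R(c)` with `R = dominoModulusSqRatio`
continuous at `c = 1` and `R(1) = 4`; hence `k(x) ~ 2x`. The gap `K(k) - F((π - β₁)/2, k)`
integrates over an interval of length `β₁/2` an integrand squeezed between `1` and
`1/√(1 - k²)`, so it is `~ β₁/2 ~ x/2`. Altogether `x G(x) = x² / (k (K - F)) → 1`.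
-/

open Filter Topology Set MeasureTheory

noncomputable def dominoModulusSqRatio (c : ℝ) : ℝ :=
  2 * (1 + c ^ 2) ^ 2 * (1 + c) / (4 * c ^ 4 + 2 * (1 - c ^ 2) * (1 + c ^ 2) ^ 2 * (1 + c))

lemma dominoModulus_radicand_eq {c : ℝ} (h0 : 0 < c) (h1 : c < 1) :
    2 * (1 - (2 / (c ^ 2 + 1 / c ^ 2)) ^ 2) /
        ((1 - c) * (2 / (c ^ 2 + 1 / c ^ 2)) ^ 2 + 2 * (1 - (2 / (c ^ 2 + 1 / c ^ 2)) ^ 2)) =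
      (1 - c ^ 2) * dominoModulusSqRatio c := by
  have hf : 2 / (c ^ 2 + 1 / c ^ 2) = 2 * c ^ 2 / (c ^ 4 + 1) := by field_simp
  rw [hf, dominoModulusSqRatio]
  have hc4 : 0 < c ^ 4 + 1 := by positivity
  have hf_le : 2 * c ^ 2 / (c ^ 4 + 1) ≤ 1 := by
    rw [div_le_one hc4]; nlinarith [sq_nonneg (c ^ 2 - 1)]
  have hden : 0 < (1 - c) * (2 * c ^ 2 / (c ^ 4 + 1)) ^ 2
      + 2 * (1 - (2 * c ^ 2 / (c ^ 4 + 1)) ^ 2) := by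
    have hf_pos : 0 < 2 * c ^ 2 / (c ^ 4 + 1) := by positivity
    exact add_pos_of_pos_of_nonneg (mul_pos (by linarith) (by positivity)) (by nlinarith)
  have hden' : 0 < 4 * c ^ 4 + 2 * (1 - c ^ 2) * (1 + c ^ 2) ^ 2 * (1 + c) := by
    have hc2 : 0 < 1 - c ^ 2 := by nlinarith
    positivity
  rw [← mul_div_assoc, div_eq_div_iff hden.ne' hden'.ne']
  field_simp
  ring

lemma dominoModulus_eq {x : ℝ} (hx0 : 0 < x) (hx1 : x < 1) :
    dominoModulus x = x * √(dominoModulusSqRatio √(1 - x ^ 2)) := by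
  have hx2 : 0 < 1 - x ^ 2 := by nlinarith
  have hc1 : √(1 - x ^ 2) < 1 := by
    rw [sqrt_lt' one_pos]; linarith [pow_pos hx0 2]
  rw [dominoModulus, cos_arcsin, dominoModulus_radicand_eq (sqrt_pos.2 hx2) hc1,
    sq_sqrt hx2.le, sub_sub_cancel, sqrt_mul (sq_nonneg x), sqrt_sq hx0.le]

lemma tendsto_dominoModulus_div_self :
    Tendsto (fun x => dominoModulus x / x) (𝓝[>] 0) (𝓝 2) := by
  have hcont : ContinuousAt (fun x : ℝ => √(dominoModulusSqRatio √(1 - x ^ 2))) 0 := by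
    unfold dominoModulusSqRatio
    exact (ContinuousAt.div (by fun_prop) (by fun_prop) (by norm_num)).sqrt
  have hval : √(dominoModulusSqRatio √(1 - (0:ℝ) ^ 2)) = 2 := by
    rw [show (2:ℝ) = √(2 ^ 2) by simp]
    norm_num [dominoModulusSqRatio]
  rw [← hval]
  refine (hcont.tendsto.mono_left nhdsWithin_le_nhds).congr' ?_
  filter_upwards [Ioo_mem_nhdsGT (zero_lt_one' ℝ)] with x hx
  rw [dominoModulus_eq hx.1 hx.2, mul_div_cancel_left₀ _ hx.1.ne']

lemma tendsto_dominoModulus : Tendsto dominoModulus (𝓝[>] 0) (𝓝 0) := by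
  have h := tendsto_dominoModulus_div_self.mul (tendsto_nhdsWithin_of_tendsto_nhds tendsto_id)
  rw [mul_zero] at h
  refine h.congr' ?_
  filter_upwards [self_mem_nhdsWithin] with x hx
  exact div_mul_cancel₀ _ (ne_of_gt hx)

section EllipticIntegral

variable {k : ℝ}

lemma sqrt_one_sub_sq_mul_sin_sq_pos (hk : k ^ 2 < 1) (t : ℝ) :
    0 < √(1 - k ^ 2 * sin t ^ 2) := by
  apply sqrt_pos.2
  nlinarith [sin_sq_le_one t, sq_nonneg k, sq_nonneg (sin t)]

lemma continuous_ellipticF_integrand (hk : k ^ 2 < 1) :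
    Continuous fun t => 1 / √(1 - k ^ 2 * sin t ^ 2) :=
  continuous_const.div (by fun_prop) fun t => (sqrt_one_sub_sq_mul_sin_sq_pos hk t).ne'

lemma one_le_ellipticF_integrand (hk : k ^ 2 < 1) (t : ℝ) :
    1 ≤ 1 / √(1 - k ^ 2 * sin t ^ 2) := by
  rw [le_div_iff₀ (sqrt_one_sub_sq_mul_sin_sq_pos hk t), one_mul, sqrt_le_one]
  nlinarith [sq_nonneg k, sq_nonneg (sin t)]

lemma ellipticF_integrand_le (hk : k ^ 2 < 1) (t : ℝ) :
    1 / √(1 - k ^ 2 * sin t ^ 2) ≤ 1 / √(1 - k ^ 2) := by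
  apply one_div_le_one_div_of_le (sqrt_pos.2 (by linarith)) (sqrt_le_sqrt _)
  nlinarith [sin_sq_le_one t, sq_nonneg k]

lemma ellipticF_sub_ellipticF (hk : k ^ 2 < 1) (φ ψ : ℝ) :
    ellipticF ψ k - ellipticF φ k = ∫ t in φ..ψ, 1 / √(1 - k ^ 2 * sin t ^ 2) :=
  intervalIntegral.integral_interval_sub_left
    ((continuous_ellipticF_integrand hk).intervalIntegrable _ _)
    ((continuous_ellipticF_integrand hk).intervalIntegrable _ _)

lemma sub_le_ellipticF_sub_ellipticF (hk : k ^ 2 < 1) {φ ψ : ℝ} (h : φ ≤ ψ) :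
    ψ - φ ≤ ellipticF ψ k - ellipticF φ k := by
  rw [ellipticF_sub_ellipticF hk]
  simpa using intervalIntegral.integral_mono_on h (intervalIntegrable_const (μ := volume))
    ((continuous_ellipticF_integrand hk).intervalIntegrable _ _)
    fun t _ => one_le_ellipticF_integrand hk t

lemma ellipticF_sub_ellipticF_le (hk : k ^ 2 < 1) {φ ψ : ℝ} (h : φ ≤ ψ) :
    ellipticF ψ k - ellipticF φ k ≤ (ψ - φ) / √(1 - k ^ 2) := by
  rw [ellipticF_sub_ellipticF hk]
  simpa [div_eq_mul_one_div (ψ - φ)] using intervalIntegral.integral_mono_on h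
    ((continuous_ellipticF_integrand hk).intervalIntegrable _ _)
    (intervalIntegrable_const (μ := volume))
    fun t _ => ellipticF_integrand_le hk t

end EllipticIntegral

lemma tendsto_ellipticF_sub_div_sub {α : Type*} {l : Filter α} {k φ ψ : α → ℝ}
    (hk : Tendsto k l (𝓝 0)) (hφψ : ∀ᶠ a in l, φ a < ψ a) :
    Tendsto (fun a => (ellipticF (ψ a) (k a) - ellipticF (φ a) (k a)) / (ψ a - φ a)) l (𝓝 1) := by
  have hk2 : ∀ᶠ a in l, k a ^ 2 < 1 := by
    have := hk.pow 2
    rw [zero_pow two_ne_zero] at this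
    exact this.eventually (gt_mem_nhds one_pos)
  have hupper : Tendsto (fun a => 1 / √(1 - k a ^ 2)) l (𝓝 1) := by
    simpa using (((hk.pow 2).const_sub 1).sqrt).inv₀ (by norm_num)
  refine tendsto_of_tendsto_of_tendsto_of_le_of_le' tendsto_const_nhds hupper ?_ ?_
  · filter_upwards [hk2, hφψ] with a hk hlt
    rw [le_div_iff₀ (sub_pos.2 hlt), one_mul]
    exact sub_le_ellipticF_sub_ellipticF hk hlt.le
  · filter_upwards [hk2, hφψ] with a hk hlt
    rw [div_le_iff₀ (sub_pos.2 hlt), one_div_mul_eq_div]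
    exact ellipticF_sub_ellipticF_le hk hlt.le

lemma tendsto_div_arcsin : Tendsto (fun x => x / arcsin x) (𝓝[>] 0) (𝓝 1) := by
  have h := (hasDerivAt_arcsin (x := 0) (by norm_num) (by norm_num)).tendsto_slope_zero_right
  simpa [div_eq_inv_mul] using h.inv₀ (by norm_num)

theorem scaling_function_small_spacing :
    Tendsto (fun x : ℝ => x * dominoG x) (nhdsWithin 0 (Set.Ioi 0)) (nhds 1) := by
  have hgap := tendsto_ellipticF_sub_div_sub (ψ := fun _ => π / 2)
    (φ := fun x => (π - arcsin x) / 2) tendsto_dominoModulus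
    (eventually_nhdsWithin_of_forall fun x hx => by linarith [arcsin_pos.2 hx])
  -- `x G(x) = 2 (x / β₁) / ((k / x) · (K - F) / (β₁ / 2))`
  have hlim := (tendsto_div_arcsin.const_mul 2).div
    (tendsto_dominoModulus_div_self.mul hgap) (by norm_num)
  rw [mul_one, div_self two_ne_zero] at hlim
  refine hlim.congr' ?_
  filter_upwards [self_mem_nhdsWithin] with x (hx : 0 < x)
  have harcsin : arcsin x ≠ 0 := (arcsin_pos.2 hx).ne'
  rw [Pi.div_apply, dominoG, show π / 2 - (π - arcsin x) / 2 = arcsin x / 2 by ring]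
  simp only [div_eq_mul_inv, mul_inv]
  field_simp
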